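/- arXiv:2508.09738 — 4 statements merged into one kernel-verified Lean document; each statement's English description precedes it below -/
import Mathlib

section
/- If ε·λ_max(L_s + D_ω) < 2, then E is strictly concave on ℝ^{n×K}: for all U ≠ V in ℝ^{n×K} and all t ∈ (0,1), E(tU + (1−t)V) > t·E(U) + (1−t)·E(V). -/
open Matrix

noncomputable section

/-- The unit simplex `Δ` in `ℝ^K`. -/
def unitSimplex (K : ℕ) : Set (Fin K → ℝ) :=
  {y | (∀ j, 0 ≤ y j) ∧ ∑ j, y j = 1}

/-- `Σ`: matrices in `ℝ^{n×K}` each of whose rows lies in the unit simplex. -/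
def SigmaSet (n K : ℕ) : Set (Matrix (Fin n) (Fin K) ℝ) :=
  {U | ∀ i, U i ∈ unitSimplex K}

/-- `Σ̄`: binary matrices in `Σ`. -/
def SigmaBar (n K : ℕ) : Set (Matrix (Fin n) (Fin K) ℝ) :=
  {U | U ∈ SigmaSet n K ∧ ∀ i j, U i j = 0 ∨ U i j = 1}

/-- Frobenius inner product `⟨A,B⟩ = trace(AᵀB)`. -/
def frobInner {n K : ℕ} (A B : Matrix (Fin n) (Fin K) ℝ) : ℝ :=
  Matrix.trace (Aᵀ * B)

/-- Frobenius norm. -/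
def frobNorm {n K : ℕ} (A : Matrix (Fin n) (Fin K) ℝ) : ℝ :=
  Real.sqrt (∑ i, ∑ j, (A i j) ^ 2)

/-- The energy
`E(U) = (1/2)·trace(Uᵀ Lₛ U) + (1/ε)·Σᵢ uᵢᵀ(𝟙 − uᵢ) + (1/2)·Σᵢ ωᵢ‖ûᵢ − uᵢ‖²`. -/
def En {n K : ℕ} (Ls : Matrix (Fin n) (Fin n) ℝ) (ω : Fin n → ℝ)
    (Uhat : Matrix (Fin n) (Fin K) ℝ) (ε : ℝ) (U : Matrix (Fin n) (Fin K) ℝ) : ℝ :=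
  (1 / 2) * Matrix.trace (Uᵀ * Ls * U)
    + (1 / ε) * ∑ i, ∑ j, U i j * (1 - U i j)
    + (1 / 2) * ∑ i, ω i * ∑ j, (Uhat i j - U i j) ^ 2

/-- The gradient `∇E(U) = Lₛ U + (1/ε)(J − 2U) − D_ω(Û − U)` (`J` the all-ones matrix). -/
def gradE {n K : ℕ} (Ls : Matrix (Fin n) (Fin n) ℝ) (ω : Fin n → ℝ)
    (Uhat : Matrix (Fin n) (Fin K) ℝ) (ε : ℝ) (U : Matrix (Fin n) (Fin K) ℝ) :
    Matrix (Fin n) (Fin K) ℝ :=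
  Ls * U + (1 / ε) • (Matrix.of (fun _ _ => (1 : ℝ)) - 2 • U)
    - Matrix.diagonal ω * (Uhat - U)


/-!
`E` is a quadratic function of `U`, so along a segment its concavity defect is exact:
`E(tU + (1-t)V) - tE(U) - (1-t)E(V) = t(1-t)·(‖W‖²/ε - ½⟨W, (Lₛ + D_ω) W⟩)` with `W = U - V`,
the linear and constant parts cancelling. The spectral bound
`⟨W, (Lₛ + D_ω) W⟩ ≤ λ_max ‖W‖² < (2/ε) ‖W‖²` makes the right-hand side positive for `W ≠ 0`.
-/

namespace Matrix

variable {m n R : Type*} [Fintype m] [Fintype n]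

theorem trace_sub_transpose_mul_mul_sub_convexComb [CommRing R] (M : Matrix m m R)
    (A U V : Matrix m n R) (t : R) :
    trace ((A - (t • U + (1 - t) • V))ᵀ * M * (A - (t • U + (1 - t) • V))) =
      t * trace ((A - U)ᵀ * M * (A - U)) + (1 - t) * trace ((A - V)ᵀ * M * (A - V))
        - t * (1 - t) * trace ((U - V)ᵀ * M * (U - V)) := by
  simp only [transpose_add, transpose_sub, transpose_smul, Matrix.add_mul, Matrix.sub_mul,
    Matrix.mul_add, Matrix.mul_sub, Matrix.smul_mul, Matrix.mul_smul, trace_add, trace_sub,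
    trace_smul, smul_eq_mul]
  ring

theorem trace_transpose_mul_mul_convexComb [CommRing R] (M : Matrix m m R) (U V : Matrix m n R)
    (t : R) :
    trace ((t • U + (1 - t) • V)ᵀ * M * (t • U + (1 - t) • V)) =
      t * trace (Uᵀ * M * U) + (1 - t) * trace (Vᵀ * M * V)
        - t * (1 - t) * trace ((U - V)ᵀ * M * (U - V)) := by
  simpa only [zero_sub, transpose_neg, Matrix.neg_mul, Matrix.mul_neg, neg_neg] using
    trace_sub_transpose_mul_mul_sub_convexComb M 0 U V t

theorem trace_transpose_mul_diagonal_mul [DecidableEq m] [CommSemiring R] (w : m → R)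
    (A : Matrix m n R) : trace (Aᵀ * diagonal w * A) = ∑ i, w i * ∑ j, A i j ^ 2 := by
  simp only [trace, diag, mul_apply (M := Aᵀ * diagonal w), mul_diagonal, transpose_apply,
    Finset.mul_sum]
  rw [Finset.sum_comm]
  exact Finset.sum_congr rfl fun i _ => Finset.sum_congr rfl fun j _ => by ring

theorem trace_transpose_mul_self [CommSemiring R] (A : Matrix m n R) :
    trace (Aᵀ * A) = ∑ i, ∑ j, A i j ^ 2 := by
  classical
  simpa using trace_transpose_mul_diagonal_mul (fun _ => (1 : R)) A

theorem trace_transpose_mul_self_pos {A : Matrix m n ℝ} (hA : A ≠ 0) : 0 < trace (Aᵀ * A) := by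
  rw [← conjTranspose_eq_transpose_of_trivial]
  exact (posSemidef_conjTranspose_mul_self A).trace_nonneg.lt_of_ne'
    (trace_conjTranspose_mul_self_eq_zero_iff.not.mpr hA)

theorem IsHermitian.posSemidef_smul_one_sub [DecidableEq n] {H : Matrix n n ℝ}
    (hH : H.IsHermitian) {c : ℝ} (hc : ∀ i, hH.eigenvalues i ≤ c) : (c • 1 - H).PosSemidef := by
  refine posSemidef_iff_isHermitian_and_spectrum_nonneg.mpr
    ⟨(isHermitian_one.smul (IsSelfAdjoint.all c)).sub hH, ?_⟩
  rw [← Algebra.algebraMap_eq_smul_one, ← spectrum.singleton_sub_eq,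
    hH.spectrum_real_eq_range_eigenvalues]
  rintro _ ⟨_, rfl, _, ⟨i, rfl⟩, rfl⟩
  simpa using hc i

theorem IsHermitian.trace_transpose_mul_mul_le [DecidableEq n] {H : Matrix n n ℝ}
    (hH : H.IsHermitian) {c : ℝ} (hc : ∀ i, hH.eigenvalues i ≤ c) (W : Matrix n m ℝ) :
    trace (Wᵀ * H * W) ≤ c * trace (Wᵀ * W) := by
  have := ((hH.posSemidef_smul_one_sub hc).conjTranspose_mul_mul_same W).trace_nonneg
  simp only [conjTranspose_eq_transpose_of_trivial, Matrix.mul_sub, Matrix.sub_mul, trace_sub,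
    Matrix.mul_smul, Matrix.smul_mul, trace_smul, Matrix.mul_one, smul_eq_mul] at this
  linarith

end Matrix

theorem En_eq_trace {n K : ℕ} (Ls : Matrix (Fin n) (Fin n) ℝ) (ω : Fin n → ℝ)
    (Uhat : Matrix (Fin n) (Fin K) ℝ) (ε : ℝ) (X : Matrix (Fin n) (Fin K) ℝ) :
    En Ls ω Uhat ε X = 1 / 2 * trace (Xᵀ * Ls * X) + 1 / ε * (∑ i, ∑ j, X i j - trace (Xᵀ * X))
      + 1 / 2 * trace ((Uhat - X)ᵀ * diagonal ω * (Uhat - X)) := by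
  simp only [En, trace_transpose_mul_self, trace_transpose_mul_diagonal_mul, Matrix.sub_apply,
    ← Finset.sum_sub_distrib, mul_one_sub, sq]

theorem En_convexComb {n K : ℕ} (Ls : Matrix (Fin n) (Fin n) ℝ) (ω : Fin n → ℝ)
    (Uhat : Matrix (Fin n) (Fin K) ℝ) (ε : ℝ) (U V : Matrix (Fin n) (Fin K) ℝ) (t : ℝ) :
    En Ls ω Uhat ε (t • U + (1 - t) • V) = t * En Ls ω Uhat ε U + (1 - t) * En Ls ω Uhat ε V
      + t * (1 - t) * (1 / ε * trace ((U - V)ᵀ * (U - V))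
        - 1 / 2 * trace ((U - V)ᵀ * (Ls + diagonal ω) * (U - V))) := by
  have hnorm := trace_transpose_mul_mul_convexComb (1 : Matrix (Fin n) (Fin n) ℝ) U V t
  simp only [Matrix.mul_one] at hnorm
  have hsum : ∑ i, ∑ j, (t • U + (1 - t) • V) i j
      = t * ∑ i, ∑ j, U i j + (1 - t) * ∑ i, ∑ j, V i j := by
    simp only [Matrix.add_apply, Matrix.smul_apply, smul_eq_mul, Finset.sum_add_distrib,
      Finset.mul_sum]
  rw [En_eq_trace, En_eq_trace, En_eq_trace, trace_transpose_mul_mul_convexComb Ls, hnorm, hsum,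
    trace_sub_transpose_mul_mul_sub_convexComb, Matrix.mul_add, Matrix.add_mul, trace_add]
  ring

theorem En_strictly_concave_general (n K : ℕ)
    (Ls : Matrix (Fin n) (Fin n) ℝ)
    (ω : Fin n → ℝ)
    (Uhat : Matrix (Fin n) (Fin K) ℝ)
    (ε : ℝ) (hε : 0 < ε)
    (hH : (Ls + Matrix.diagonal ω).IsHermitian)
    (lam : ℝ) (hlam : IsGreatest (Set.range hH.eigenvalues) lam)
    (hsmall : ε * lam < 2) :
    ∀ U V : Matrix (Fin n) (Fin K) ℝ, U ≠ V → ∀ t : ℝ, 0 < t → t < 1 →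
      t * En Ls ω Uhat ε U + (1 - t) * En Ls ω Uhat ε V
        < En Ls ω Uhat ε (t • U + (1 - t) • V) := by
  intro U V hUV t ht0 ht1
  have hnorm := trace_transpose_mul_self_pos (sub_ne_zero.mpr hUV)
  have hquad := hH.trace_transpose_mul_mul_le (fun i => hlam.2 ⟨i, rfl⟩) (U - V)
  have hgap : 0 < 1 / ε * trace ((U - V)ᵀ * (U - V))
      - 1 / 2 * trace ((U - V)ᵀ * (Ls + diagonal ω) * (U - V)) :=
    calc 0 < (2 - ε * lam) / (2 * ε) * trace ((U - V)ᵀ * (U - V)) :=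
          mul_pos (div_pos (by linarith) (by positivity)) hnorm
      _ = 1 / ε * trace ((U - V)ᵀ * (U - V)) - 1 / 2 * (lam * trace ((U - V)ᵀ * (U - V))) := by
          field_simp
      _ ≤ _ := by linarith
  rw [En_convexComb]
  linarith [mul_pos (mul_pos ht0 (sub_pos.mpr ht1)) hgap]

/-- if `ε·λ_max(Lₛ + D_ω) < 2` then `E` is strictly concave on `ℝ^{n×K}`. -/
theorem En_strictly_concave (n K : ℕ) (hn : 1 ≤ n) (hK : 2 ≤ K)
    (Ls : Matrix (Fin n) (Fin n) ℝ) (hLs : Ls.PosSemidef)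
    (ω : Fin n → ℝ) (hω : ∀ i, 0 ≤ ω i)
    (Uhat : Matrix (Fin n) (Fin K) ℝ) (hUhat : Uhat ∈ SigmaSet n K)
    (ε : ℝ) (hε : 0 < ε)
    (hH : (Ls + Matrix.diagonal ω).IsHermitian)
    (lam : ℝ) (hlam : IsGreatest (Set.range hH.eigenvalues) lam)
    (hsmall : ε * lam < 2) :
    ∀ U V : Matrix (Fin n) (Fin K) ℝ, U ≠ V → ∀ t : ℝ, 0 < t → t < 1 →
      t * En Ls ω Uhat ε U + (1 - t) * En Ls ω Uhat ε V
        < En Ls ω Uhat ε (t • U + (1 - t) • V) :=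
  En_strictly_concave_general n K Ls ω Uhat ε hε hH lam hlam hsmall
end
end

section
/- Assume ε·λ_max(L_s + D_ω) < 2. Then every local minimizer U* of E on Σ is binary, i.e., U* ∈ Σ̄, and moreover U* is a strict local minimizer: there exists r > 0 such that E(U) > E(U*) for every U ∈ Σ with 0 < ‖U − U*‖_F < r. -/
open Matrix

noncomputable section

/-!
Write `⟨·,·⟩` for the Frobenius inner product. Expanding the energy gives
`E(U + W) = E(U) + ⟨∇E(U), W⟩ + ½ (⟨W, (Lₛ + D_ω) W⟩ - (2/ε)‖W‖²)`, and the quadratic part is at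
most `½ (λ_max - 2/ε)‖W‖² < 0`, so `E` is strictly concave along every segment. At a local
minimizer `U*` the slope along every segment into `Σ` is therefore strictly positive:
`⟨∇E(U*), V - U*⟩ > 0` for all `V ∈ Σ \ {U*}`. Taking for `V` the matrix `U*` with row `i`
replaced by a vertex `e_b` of the simplex, and averaging over `b` with the weights of that row,
shows that every row of `U*` is a vertex `e_{κ i}` and that in row `i` every other entry of the
gradient exceeds the one at `κ i` by at least some uniform `δ > 0`. For `U ∈ Σ` near `U*` the
linear term is then at least `δ Σᵢ (1 - U i (κ i))`, while the quadratic term is at least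
`-(1/ε)‖W‖² ≥ -(2/ε)‖W‖ Σᵢ (1 - U i (κ i))`; the former wins once `‖W‖ < εδ/2`.
-/

section Frobenius
variable {n K : ℕ}

lemma frobInner_eq_sum_dotProduct (A B : Matrix (Fin n) (Fin K) ℝ) :
    frobInner A B = ∑ i, A i ⬝ᵥ B i := by
  simp only [frobInner, trace, diag, mul_apply, transpose_apply, dotProduct]
  exact Finset.sum_comm

lemma frobInner_updateRow_sub (G M : Matrix (Fin n) (Fin K) ℝ) (i : Fin n) (v : Fin K → ℝ) :
    frobInner G (M.updateRow i v - M) = G i ⬝ᵥ (v - M i) := by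
  rw [frobInner_eq_sum_dotProduct, Finset.sum_eq_single i]
  · change G i ⬝ᵥ (M.updateRow i v i - M i) = _
    rw [updateRow_self]
  · intro k _ hk
    change G k ⬝ᵥ (M.updateRow i v k - M k) = 0
    rw [updateRow_ne hk, sub_self, dotProduct_zero]
  · exact fun h => absurd (Finset.mem_univ i) h

lemma frobInner_comm (A B : Matrix (Fin n) (Fin K) ℝ) : frobInner A B = frobInner B A := by
  rw [frobInner, ← trace_transpose, transpose_mul, transpose_transpose, frobInner]

@[simp] lemma frobInner_add_left (A B C : Matrix (Fin n) (Fin K) ℝ) :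
    frobInner (A + B) C = frobInner A C + frobInner B C := by
  simp [frobInner, Matrix.add_mul]

@[simp] lemma frobInner_add_right (A B C : Matrix (Fin n) (Fin K) ℝ) :
    frobInner A (B + C) = frobInner A B + frobInner A C := by
  simp [frobInner, Matrix.mul_add]

@[simp] lemma frobInner_sub_left (A B C : Matrix (Fin n) (Fin K) ℝ) :
    frobInner (A - B) C = frobInner A C - frobInner B C := by
  simp [frobInner, Matrix.sub_mul]

@[simp] lemma frobInner_sub_right (A B C : Matrix (Fin n) (Fin K) ℝ) :
    frobInner A (B - C) = frobInner A B - frobInner A C := by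
  simp [frobInner, Matrix.mul_sub]

@[simp] lemma frobInner_smul_left (t : ℝ) (A B : Matrix (Fin n) (Fin K) ℝ) :
    frobInner (t • A) B = t * frobInner A B := by
  simp [frobInner]

@[simp] lemma frobInner_smul_right (t : ℝ) (A B : Matrix (Fin n) (Fin K) ℝ) :
    frobInner A (t • B) = t * frobInner A B := by
  simp [frobInner]

@[simp] lemma frobInner_neg_left (A B : Matrix (Fin n) (Fin K) ℝ) :
    frobInner (-A) B = -frobInner A B := by
  simp [frobInner]

@[simp] lemma frobInner_neg_right (A B : Matrix (Fin n) (Fin K) ℝ) :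
    frobInner A (-B) = -frobInner A B := by
  simp [frobInner]

lemma frobInner_mul_right {M : Matrix (Fin n) (Fin n) ℝ} (hM : M.IsSymm)
    (A B : Matrix (Fin n) (Fin K) ℝ) : frobInner A (M * B) = frobInner (M * A) B := by
  rw [frobInner, frobInner, transpose_mul, hM.eq, Matrix.mul_assoc]

lemma frobInner_add_mul_add {M : Matrix (Fin n) (Fin n) ℝ} (hM : M.IsSymm)
    (A B : Matrix (Fin n) (Fin K) ℝ) :
    frobInner (A + B) (M * (A + B))
      = frobInner A (M * A) + 2 * frobInner (M * A) B + frobInner B (M * B) := by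
  rw [Matrix.mul_add, frobInner_add_left, frobInner_add_right, frobInner_add_right,
    frobInner_mul_right hM A B, frobInner_comm B (M * A)]
  ring

lemma frobInner_self_eq_sum_sq (A : Matrix (Fin n) (Fin K) ℝ) :
    frobInner A A = ∑ i, ∑ j, A i j ^ 2 := by
  simp only [frobInner_eq_sum_dotProduct, dotProduct, sq]

lemma frobNorm_sq (A : Matrix (Fin n) (Fin K) ℝ) : frobNorm A ^ 2 = frobInner A A := by
  rw [frobNorm, frobInner_self_eq_sum_sq, Real.sq_sqrt (by positivity)]

lemma frobNorm_smul_of_nonneg {t : ℝ} (ht : 0 ≤ t) (A : Matrix (Fin n) (Fin K) ℝ) :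
    frobNorm (t • A) = t * frobNorm A := by
  have hsum : ∑ i, ∑ j, (t • A) i j ^ 2 = t ^ 2 * ∑ i, ∑ j, A i j ^ 2 := by
    simp only [Matrix.smul_apply, smul_eq_mul, mul_pow, Finset.mul_sum]
  rw [frobNorm, frobNorm, hsum, Real.sqrt_mul (sq_nonneg t), Real.sqrt_sq ht]

lemma abs_apply_le_frobNorm (A : Matrix (Fin n) (Fin K) ℝ) (i : Fin n) (j : Fin K) :
    |A i j| ≤ frobNorm A := by
  refine Real.abs_le_sqrt ?_
  calc A i j ^ 2 ≤ ∑ b, A i b ^ 2 :=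
        Finset.single_le_sum (fun b _ => sq_nonneg (A i b)) (Finset.mem_univ j)
    _ ≤ ∑ a, ∑ b, A a b ^ 2 :=
        Finset.single_le_sum (f := fun a => ∑ b, A a b ^ 2) (fun a _ => by positivity)
          (Finset.mem_univ i)

lemma frobNorm_pos {A : Matrix (Fin n) (Fin K) ℝ} (hA : A ≠ 0) : 0 < frobNorm A := by
  obtain ⟨i, j, hij⟩ : ∃ i j, A i j ≠ 0 := by
    by_contra! h
    exact hA (Matrix.ext h)
  exact (abs_pos.mpr hij).trans_le (abs_apply_le_frobNorm A i j)

lemma Matrix.PosSemidef.frobInner_mul_nonneg {M : Matrix (Fin n) (Fin n) ℝ} (hM : M.PosSemidef)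
    (A : Matrix (Fin n) (Fin K) ℝ) : 0 ≤ frobInner A (M * A) := by
  have := (hM.conjTranspose_mul_mul_same A).trace_nonneg
  rwa [conjTranspose_eq_transpose_of_trivial, Matrix.mul_assoc] at this

open scoped Matrix.Norms.L2Operator MatrixOrder in
lemma Matrix.IsHermitian.frobInner_mul_le {H : Matrix (Fin n) (Fin n) ℝ} (hH : H.IsHermitian) {lam : ℝ}
    (hlam : ∀ i, hH.eigenvalues i ≤ lam) (A : Matrix (Fin n) (Fin K) ℝ) :
    frobInner A (H * A) ≤ lam * frobInner A A := by
  have hle : H ≤ algebraMap ℝ _ lam := by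
    rw [le_algebraMap_iff_spectrum_le (ha := hH.isSelfAdjoint),
      hH.spectrum_real_eq_range_eigenvalues]
    rintro _ ⟨i, rfl⟩
    exact hlam i
  rw [Matrix.le_iff, Algebra.algebraMap_eq_smul_one] at hle
  have := hle.frobInner_mul_nonneg A
  rw [Matrix.sub_mul, Matrix.smul_mul, Matrix.one_mul, frobInner_sub_right,
    frobInner_smul_right] at this
  linarith

end Frobenius

lemma pos_of_forall_nonneg_mul_add_mul_sq {a q τ : ℝ} (hq : q < 0) (hτ : 0 < τ)
    (h : ∀ t, 0 < t → t < τ → 0 ≤ a * t + q * t ^ 2) : 0 < a := by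
  have ht := h (τ / 2) (by positivity) (by linarith)
  have hquad : q * (τ / 2) ^ 2 < 0 := mul_neg_of_neg_of_pos hq (by positivity)
  exact (mul_pos_iff_of_pos_right (by positivity : 0 < τ / 2)).mp (by linarith)

lemma exists_pos_le_of_finite {ι : Type*} [Finite ι] {p : ι → Prop} {f : ι → ℝ}
    (hf : ∀ i, p i → 0 < f i) : ∃ δ > 0, ∀ i, p i → δ ≤ f i := by
  rcases {i | p i}.eq_empty_or_nonempty with h | h
  · exact ⟨1, one_pos, fun i hi => (Set.eq_empty_iff_forall_notMem.mp h i hi).elim⟩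
  · obtain ⟨i₀, hi₀, hmin⟩ := Set.exists_min_image _ f (Set.toFinite _) h
    exact ⟨f i₀, hf i₀ hi₀, hmin⟩

lemma convex_SigmaSet (n K : ℕ) : Convex ℝ (SigmaSet n K) :=
  fun _ hU _ hV _ _ ha hb hab i => convex_stdSimplex ℝ (Fin K) (hU i) (hV i) ha hb hab

section Simplex
variable {K : ℕ} {x : Fin K → ℝ}

lemma exists_le_dotProduct (hx : x ∈ unitSimplex K) (g : Fin K → ℝ) : ∃ b, g b ≤ g ⬝ᵥ x := by
  by_contra! h
  obtain ⟨b, -, hb⟩ : ∃ b ∈ Finset.univ, (0 : ℝ) < x b :=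
    Finset.exists_lt_of_sum_lt (by simp [hx.2])
  have : ∑ c, x c * (g ⬝ᵥ x) < ∑ c, x c * g c :=
    Finset.sum_lt_sum (fun c _ => mul_le_mul_of_nonneg_left (h c).le (hx.1 c))
      ⟨b, Finset.mem_univ b, mul_lt_mul_of_pos_left (h b) hb⟩
  rw [← Finset.sum_mul, hx.2, one_mul] at this
  simp only [dotProduct, mul_comm (g _)] at this
  exact lt_irrefl _ this

lemma sum_erase_eq_one_sub (hx : x ∈ unitSimplex K) (k : Fin K) :
    ∑ b ∈ Finset.univ.erase k, x b = 1 - x k := by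
  rw [← hx.2, ← Finset.sum_erase_add _ _ (Finset.mem_univ k), add_sub_cancel_right]

lemma mul_one_sub_le_dotProduct_sub_single (hx : x ∈ unitSimplex K) {g : Fin K → ℝ} {k : Fin K}
    {δ : ℝ} (hg : ∀ b, b ≠ k → g k + δ ≤ g b) :
    δ * (1 - x k) ≤ g ⬝ᵥ (x - Pi.single k 1) := by
  have hrow : g ⬝ᵥ (x - Pi.single k 1) = ∑ b ∈ Finset.univ.erase k, (g b - g k) * x b := by
    rw [Finset.sum_erase _ (by rw [sub_self, zero_mul]), dotProduct_sub, dotProduct_single,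
      mul_one]
    simp only [sub_mul, Finset.sum_sub_distrib, ← Finset.mul_sum, hx.2, mul_one, dotProduct]
  rw [hrow, ← sum_erase_eq_one_sub hx k, Finset.mul_sum]
  exact Finset.sum_le_sum fun b hb =>
    mul_le_mul_of_nonneg_right (by linarith [hg b (Finset.ne_of_mem_erase hb)]) (hx.1 b)

lemma dotProduct_self_sub_single_le (hx : x ∈ unitSimplex K) (k : Fin K) :
    (x - Pi.single k 1) ⬝ᵥ (x - Pi.single k 1) ≤ 2 * (1 - x k) ^ 2 := by
  have hsq : ∑ b ∈ Finset.univ.erase k, x b ^ 2 ≤ (1 - x k) ^ 2 := by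
    rw [← sum_erase_eq_one_sub hx k]
    exact Finset.sum_sq_le_sq_sum_of_nonneg fun b _ => hx.1 b
  rw [dotProduct, ← Finset.sum_erase_add _ _ (Finset.mem_univ k)]
  rw [Finset.sum_congr rfl fun b hb => by
    rw [Pi.sub_apply, Pi.single_eq_of_ne (Finset.ne_of_mem_erase hb), sub_zero]]
  simp only [Pi.sub_apply, Pi.single_eq_same, ← sq]
  nlinarith

end Simplex

section Energy
variable {n K : ℕ} (Ls : Matrix (Fin n) (Fin n) ℝ) (ω : Fin n → ℝ)
  (Uhat : Matrix (Fin n) (Fin K) ℝ) (ε : ℝ)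

def hessForm (W : Matrix (Fin n) (Fin K) ℝ) : ℝ :=
  frobInner W ((Ls + diagonal ω) * W) - (2 / ε) * frobInner W W

lemma En_eq_frobInner (U : Matrix (Fin n) (Fin K) ℝ) :
    En Ls ω Uhat ε U = (1 / 2) * frobInner U (Ls * U)
      + (1 / ε) * frobInner U (of (fun _ _ => (1 : ℝ)) - U)
      + (1 / 2) * frobInner (Uhat - U) (diagonal ω * (Uhat - U)) := by
  have htr : trace (Uᵀ * Ls * U) = frobInner U (Ls * U) := by rw [frobInner, Matrix.mul_assoc]
  rw [En, htr]
  simp only [frobInner_eq_sum_dotProduct, dotProduct, diagonal_mul, Matrix.sub_apply, of_apply,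
    Finset.mul_sum]
  congr 2
  funext i
  exact Finset.sum_congr rfl fun j _ => by ring

variable {Ls} in
lemma En_add (hLs : Ls.IsSymm) (U W : Matrix (Fin n) (Fin K) ℝ) :
    En Ls ω Uhat ε (U + W)
      = En Ls ω Uhat ε U + frobInner (gradE Ls ω Uhat ε U) W + (1 / 2) * hessForm Ls ω ε W := by
  have hD : (diagonal ω).IsSymm := isSymm_diagonal ω
  have hres : Uhat - (U + W) = (Uhat - U) + -W := by abel
  rw [En_eq_frobInner, En_eq_frobInner, hres, frobInner_add_mul_add hLs,
    frobInner_add_mul_add hD, gradE, hessForm]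
  simp only [frobInner_add_left, frobInner_add_right, frobInner_sub_left, frobInner_sub_right,
    frobInner_smul_left, two_nsmul, Matrix.add_mul, Matrix.mul_neg,
    frobInner_neg_left, frobInner_neg_right]
  rw [frobInner_comm W U, frobInner_comm W (of fun _ _ => 1)]
  ring

end Energy

section HessForm
variable {n K : ℕ} {Ls : Matrix (Fin n) (Fin n) ℝ} {ω : Fin n → ℝ} {ε : ℝ}

lemma hessForm_smul (t : ℝ) (W : Matrix (Fin n) (Fin K) ℝ) :
    hessForm Ls ω ε (t • W) = t ^ 2 * hessForm Ls ω ε W := by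
  simp only [hessForm, Matrix.mul_smul, frobInner_smul_left, frobInner_smul_right]
  ring

lemma hessForm_neg_of_ne_zero (hH : (Ls + diagonal ω).IsHermitian) {lam : ℝ}
    (hlam : ∀ i, hH.eigenvalues i ≤ lam) (hε : 0 < ε) (hsmall : ε * lam < 2)
    {W : Matrix (Fin n) (Fin K) ℝ} (hW : W ≠ 0) : hessForm Ls ω ε W < 0 := by
  have hWW : 0 < frobInner W W := by rw [← frobNorm_sq]; exact pow_pos (frobNorm_pos hW) 2
  have hgap : lam - 2 / ε < 0 := by rw [sub_neg, lt_div_iff₀ hε]; linarith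
  calc hessForm Ls ω ε W ≤ (lam - 2 / ε) * frobInner W W := by
        rw [hessForm]; linarith [hH.frobInner_mul_le hlam W]
    _ < 0 := mul_neg_of_neg_of_pos hgap hWW

lemma neg_le_hessForm (hpsd : (Ls + diagonal ω).PosSemidef) (W : Matrix (Fin n) (Fin K) ℝ) :
    -(2 / ε) * frobNorm W ^ 2 ≤ hessForm Ls ω ε W := by
  have := hpsd.frobInner_mul_nonneg W
  rw [hessForm, frobNorm_sq]
  linarith

end HessForm

section FirstOrder
variable {n K : ℕ} {Ls : Matrix (Fin n) (Fin n) ℝ} {ω : Fin n → ℝ}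
  {Uhat : Matrix (Fin n) (Fin K) ℝ} {ε : ℝ}

lemma frobInner_gradE_sub_pos (hLs : Ls.IsSymm)
    (hneg : ∀ W : Matrix (Fin n) (Fin K) ℝ, W ≠ 0 → hessForm Ls ω ε W < 0)
    {Ustar : Matrix (Fin n) (Fin K) ℝ} (hUstar : Ustar ∈ SigmaSet n K)
    (hloc : ∃ r > (0 : ℝ), ∀ U ∈ SigmaSet n K, frobNorm (U - Ustar) < r →
      En Ls ω Uhat ε Ustar ≤ En Ls ω Uhat ε U)
    {V : Matrix (Fin n) (Fin K) ℝ} (hV : V ∈ SigmaSet n K) (hne : V ≠ Ustar) :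
    0 < frobInner (gradE Ls ω Uhat ε Ustar) (V - Ustar) := by
  obtain ⟨r, hr, hmin⟩ := hloc
  have hW : V - Ustar ≠ 0 := sub_ne_zero.mpr hne
  have hF := frobNorm_pos hW
  refine pos_of_forall_nonneg_mul_add_mul_sq (q := (1 / 2) * hessForm Ls ω ε (V - Ustar))
    (by linarith [hneg _ hW]) (lt_min one_pos (div_pos hr hF)) fun t ht htτ => ?_
  have hmem : Ustar + t • (V - Ustar) ∈ SigmaSet n K :=
    (convex_SigmaSet n K).add_smul_sub_mem hUstar hV
      ⟨ht.le, (htτ.trans_le (min_le_left _ _)).le⟩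
  have hnear : frobNorm (Ustar + t • (V - Ustar) - Ustar) < r := by
    rw [add_sub_cancel_left, frobNorm_smul_of_nonneg ht.le]
    exact (lt_div_iff₀ hF).mp (htτ.trans_le (min_le_right _ _))
  have := hmin _ hmem hnear
  rw [En_add ω Uhat ε hLs, frobInner_smul_right, hessForm_smul] at this
  linarith

end FirstOrder

section Vertex
variable {n K : ℕ} {G U : Matrix (Fin n) (Fin K) ℝ} {κ : Fin n → Fin K}

lemma updateRow_mem_SigmaSet (hU : U ∈ SigmaSet n K) (i : Fin n) {v : Fin K → ℝ}
    (hv : v ∈ unitSimplex K) : U.updateRow i v ∈ SigmaSet n K := by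
  intro k
  by_cases hk : k = i
  · subst hk; simpa using hv
  · simpa [updateRow_ne hk] using hU k

lemma dotProduct_lt_of_forall_pos (hpos : ∀ V ∈ SigmaSet n K, V ≠ U → 0 < frobInner G (V - U))
    (hU : U ∈ SigmaSet n K) {i : Fin n} {b : Fin K}
    (hb : U i ≠ Pi.single b 1) : G i ⬝ᵥ U i < G i b := by
  have := hpos _ (updateRow_mem_SigmaSet hU i (single_mem_stdSimplex ℝ b))
    fun h => hb (by rw [← h, updateRow_self])
  rwa [frobInner_updateRow_sub, dotProduct_sub, dotProduct_single, mul_one, sub_pos] at this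

lemma exists_eq_single_of_forall_pos
    (hpos : ∀ V ∈ SigmaSet n K, V ≠ U → 0 < frobInner G (V - U)) (hU : U ∈ SigmaSet n K)
    (i : Fin n) :
    ∃ k, U i = Pi.single k 1 := by
  obtain ⟨k, hk⟩ := exists_le_dotProduct (hU i) (G i)
  by_contra! h
  exact (dotProduct_lt_of_forall_pos hpos hU (h k)).not_ge hk

lemma mem_SigmaBar_of_eq_single (hU : U ∈ SigmaSet n K) (hκ : ∀ i, U i = Pi.single (κ i) 1) :
    U ∈ SigmaBar n K := by
  refine ⟨hU, fun i j => ?_⟩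
  rw [hκ i]
  by_cases hj : j = κ i
  · subst hj; simp
  · simp [Pi.single_eq_of_ne hj]

lemma exists_gap_of_forall_pos (hU : U ∈ SigmaSet n K) (hκ : ∀ i, U i = Pi.single (κ i) 1)
    (hpos : ∀ V ∈ SigmaSet n K, V ≠ U → 0 < frobInner G (V - U)) :
    ∃ δ > 0, ∀ i b, b ≠ κ i → G i (κ i) + δ ≤ G i b := by
  obtain ⟨δ, hδ, hle⟩ := exists_pos_le_of_finite (p := fun ib : Fin n × Fin K => ib.2 ≠ κ ib.1)
    (f := fun ib => G ib.1 ib.2 - G ib.1 (κ ib.1)) fun ⟨i, b⟩ hb => by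
      have := dotProduct_lt_of_forall_pos hpos hU (i := i) (b := b)
        (by rw [hκ i]; exact fun h => by simpa [Pi.single_eq_of_ne hb] using congrFun h b)
      rw [hκ i, dotProduct_single, mul_one] at this
      exact sub_pos.mpr this
  exact ⟨δ, hδ, fun i b hb => by linarith [hle (i, b) hb]⟩

lemma mul_sum_one_sub_le_frobInner (hκ : ∀ i, U i = Pi.single (κ i) 1) {δ : ℝ}
    (hgap : ∀ i b, b ≠ κ i → G i (κ i) + δ ≤ G i b) {V : Matrix (Fin n) (Fin K) ℝ}
    (hV : V ∈ SigmaSet n K) : δ * ∑ i, (1 - V i (κ i)) ≤ frobInner G (V - U) := by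
  rw [frobInner_eq_sum_dotProduct, Finset.mul_sum]
  refine Finset.sum_le_sum fun i _ => ?_
  change _ ≤ G i ⬝ᵥ (V i - U i)
  rw [hκ i]
  exact mul_one_sub_le_dotProduct_sub_single (hV i) (hgap i)

lemma frobNorm_sub_sq_le (hκ : ∀ i, U i = Pi.single (κ i) 1) {V : Matrix (Fin n) (Fin K) ℝ}
    (hV : V ∈ SigmaSet n K) :
    frobNorm (V - U) ^ 2 ≤ 2 * frobNorm (V - U) * ∑ i, (1 - V i (κ i)) := by
  rw [frobNorm_sq, frobInner_eq_sum_dotProduct, Finset.mul_sum]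
  refine Finset.sum_le_sum fun i _ => ?_
  have hdist : 1 - V i (κ i) ≤ frobNorm (V - U) := by
    have := abs_apply_le_frobNorm (V - U) i (κ i)
    rw [Matrix.sub_apply, hκ i, Pi.single_eq_same, abs_sub_comm] at this
    exact (le_abs_self _).trans this
  have hnn : 0 ≤ 1 - V i (κ i) := by
    linarith [sum_erase_eq_one_sub (hV i) (κ i),
      Finset.sum_nonneg fun b (_ : b ∈ Finset.univ.erase (κ i)) => (hV i).1 b]
  change (V i - U i) ⬝ᵥ (V i - U i) ≤ _
  rw [hκ i]
  nlinarith [dotProduct_self_sub_single_le (hV i) (κ i)]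

end Vertex

section Strict
variable {n K : ℕ} {Ls : Matrix (Fin n) (Fin n) ℝ} {ω : Fin n → ℝ}
  {Uhat : Matrix (Fin n) (Fin K) ℝ} {ε : ℝ} {Ustar : Matrix (Fin n) (Fin K) ℝ}
  {κ : Fin n → Fin K}

lemma exists_En_lt_of_eq_single (hLs : Ls.IsSymm) (hpsd : (Ls + diagonal ω).PosSemidef)
    (hε : 0 < ε) (hUstar : Ustar ∈ SigmaSet n K) (hκ : ∀ i, Ustar i = Pi.single (κ i) 1)
    (hpos : ∀ V ∈ SigmaSet n K, V ≠ Ustar →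
      0 < frobInner (gradE Ls ω Uhat ε Ustar) (V - Ustar)) :
    ∃ r > (0 : ℝ), ∀ U ∈ SigmaSet n K, 0 < frobNorm (U - Ustar) →
      frobNorm (U - Ustar) < r → En Ls ω Uhat ε Ustar < En Ls ω Uhat ε U := by
  obtain ⟨δ, hδ, hgap⟩ := exists_gap_of_forall_pos hUstar hκ hpos
  refine ⟨ε * δ / 2, by positivity, fun U hU hF hFr => ?_⟩
  have hlin := mul_sum_one_sub_le_frobInner hκ hgap hU
  have hsq := frobNorm_sub_sq_le hκ hU
  have hhess := neg_le_hessForm (ε := ε) hpsd (U - Ustar)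
  have hexp := En_add ω Uhat ε hLs Ustar (U - Ustar)
  rw [add_sub_cancel] at hexp
  set F := frobNorm (U - Ustar)
  set T := ∑ i, (1 - U i (κ i))
  have hT : 0 < T := by nlinarith
  have hFε : 2 * F / ε < δ := by rw [div_lt_iff₀ hε]; linarith
  have hquad : F ^ 2 / ε ≤ 2 * F / ε * T := by rw [div_mul_eq_mul_div]; gcongr
  calc En Ls ω Uhat ε Ustar < En Ls ω Uhat ε Ustar + (δ - 2 * F / ε) * T :=
        lt_add_of_pos_right _ (mul_pos (sub_pos.mpr hFε) hT)
    _ ≤ En Ls ω Uhat ε Ustar + frobInner (gradE Ls ω Uhat ε Ustar) (U - Ustar)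
          + (1 / 2) * hessForm Ls ω ε (U - Ustar) := by
          linear_combination hlin + (1 / 2) * hhess + hquad
    _ = En Ls ω Uhat ε U := hexp.symm

end Strict

theorem local_min_is_binary_and_strict_general (n K : ℕ)
    (Ls : Matrix (Fin n) (Fin n) ℝ) (hLs : Ls.PosSemidef)
    (ω : Fin n → ℝ) (hω : ∀ i, 0 ≤ ω i)
    (Uhat : Matrix (Fin n) (Fin K) ℝ)
    (ε : ℝ) (hε : 0 < ε)
    (hH : (Ls + Matrix.diagonal ω).IsHermitian)
    (lam : ℝ) (hlam : IsGreatest (Set.range hH.eigenvalues) lam)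
    (hsmall : ε * lam < 2)
    (Ustar : Matrix (Fin n) (Fin K) ℝ) (hUstar : Ustar ∈ SigmaSet n K)
    (hloc : ∃ r > (0 : ℝ), ∀ U ∈ SigmaSet n K, frobNorm (U - Ustar) < r →
      En Ls ω Uhat ε Ustar ≤ En Ls ω Uhat ε U) :
    Ustar ∈ SigmaBar n K ∧
      ∃ r > (0 : ℝ), ∀ U ∈ SigmaSet n K, 0 < frobNorm (U - Ustar) →
        frobNorm (U - Ustar) < r → En Ls ω Uhat ε Ustar < En Ls ω Uhat ε U := by
  have hsym : Ls.IsSymm := isHermitian_iff_isSymm.mp hLs.1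
  have hpsd : (Ls + diagonal ω).PosSemidef := hLs.add (PosSemidef.diagonal hω)
  have hneg : ∀ W : Matrix (Fin n) (Fin K) ℝ, W ≠ 0 → hessForm Ls ω ε W < 0 :=
    fun _ => hessForm_neg_of_ne_zero hH (fun i => hlam.2 ⟨i, rfl⟩) hε hsmall
  have hpos : ∀ V ∈ SigmaSet n K, V ≠ Ustar →
      0 < frobInner (gradE Ls ω Uhat ε Ustar) (V - Ustar) :=
    fun _ hV hne => frobInner_gradE_sub_pos hsym hneg hUstar hloc hV hne
  choose κ hκ using exists_eq_single_of_forall_pos hpos hUstar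
  exact ⟨mem_SigmaBar_of_eq_single hUstar hκ,
    exists_En_lt_of_eq_single hsym hpsd hε hUstar hκ hpos⟩

/-- if `ε·λ_max(Lₛ + D_ω) < 2` then every local minimizer of `E` on `Σ` is
binary and is a strict local minimizer. -/
theorem local_min_is_binary_and_strict (n K : ℕ) (hn : 1 ≤ n) (hK : 2 ≤ K)
    (Ls : Matrix (Fin n) (Fin n) ℝ) (hLs : Ls.PosSemidef)
    (ω : Fin n → ℝ) (hω : ∀ i, 0 ≤ ω i)
    (Uhat : Matrix (Fin n) (Fin K) ℝ) (hUhat : Uhat ∈ SigmaSet n K)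
    (ε : ℝ) (hε : 0 < ε)
    (hH : (Ls + Matrix.diagonal ω).IsHermitian)
    (lam : ℝ) (hlam : IsGreatest (Set.range hH.eigenvalues) lam)
    (hsmall : ε * lam < 2)
    (Ustar : Matrix (Fin n) (Fin K) ℝ) (hUstar : Ustar ∈ SigmaSet n K)
    (hloc : ∃ r > (0 : ℝ), ∀ U ∈ SigmaSet n K, frobNorm (U - Ustar) < r →
      En Ls ω Uhat ε Ustar ≤ En Ls ω Uhat ε U) :
    Ustar ∈ SigmaBar n K ∧
      ∃ r > (0 : ℝ), ∀ U ∈ SigmaSet n K, 0 < frobNorm (U - Ustar) →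
        frobNorm (U - Ustar) < r → En Ls ω Uhat ε Ustar < En Ls ω Uhat ε U :=
  local_min_is_binary_and_strict_general n K Ls hLs ω hω Uhat ε hε hH lam hlam hsmall Ustar hUstar
    hloc
end
end

section
/- Assume ε·K·(ρ^max + d_ω^max) < 1. Let U ∈ Σ, let i be a row index, and let j' be a column index with U_{i,j'} = 0. Then the minimum of (∇E(U))_{i,j} over the support supp(u_i) := {j : U_{i,j} > 0} is strictly smaller than (∇E(U))_{i,j'}. In particular, minimizing the i-th row of the gradient only over supp(u_i) yields the same minimizing indices as minimizing it over all of {1,…,K} (the greedy linear minimization oracle coincides with the full one). -/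
open Matrix

noncomputable section

/-- if `ε·K·(ρ^max + d_ω^max) < 1`, `U ∈ Σ` and `U i j' = 0`, then the
minimum of the `i`-th gradient row over the support of `uᵢ` is strictly smaller than its
value at `j'`; in particular minimizing over the support yields the same minimizing
indices as minimizing over all of `{1,…,K}`. -/
theorem greedy_lmo_eq_lmo (n K : ℕ) (hn : 1 ≤ n) (hK : 2 ≤ K)
    (Ls : Matrix (Fin n) (Fin n) ℝ) (hLs : Ls.PosSemidef)
    (ω : Fin n → ℝ) (hω : ∀ i, 0 ≤ ω i)
    (Uhat : Matrix (Fin n) (Fin K) ℝ) (hUhat : Uhat ∈ SigmaSet n K)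
    (ε : ℝ) (hε : 0 < ε)
    (ρmax : ℝ) (hρ : IsGreatest (Set.range fun i => ∑ j, |Ls i j|) ρmax)
    (dmax : ℝ) (hd : IsGreatest (Set.range ω) dmax)
    (hcond : ε * K * (ρmax + dmax) < 1)
    (U : Matrix (Fin n) (Fin K) ℝ) (hU : U ∈ SigmaSet n K)
    (i : Fin n) (j' : Fin K) (hj' : U i j' = 0) :
    ∃ hsupp : (Finset.univ.filter fun j => 0 < U i j).Nonempty,
      ((Finset.univ.filter fun j => 0 < U i j).inf' hsupp
          fun j => gradE Ls ω Uhat ε U i j) < gradE Ls ω Uhat ε U i j' ∧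
      {j : Fin K | 0 < U i j ∧ ∀ l, 0 < U i l → gradE Ls ω Uhat ε U i j ≤ gradE Ls ω Uhat ε U i l}
        = {j : Fin K | ∀ l, gradE Ls ω Uhat ε U i j ≤ gradE Ls ω Uhat ε U i l} := by
  classical
  have hKpos : (0:ℝ) < K := by
    have : (0:ℕ) < K := by omega
    exact_mod_cast this
  haveI : Nonempty (Fin K) := ⟨⟨0, by omega⟩⟩
  have hU01 : ∀ k j, 0 ≤ U k j ∧ U k j ≤ 1 := by
    intro k j
    obtain ⟨h1, h2⟩ := hU k
    refine ⟨h1 j, ?_⟩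
    calc U k j ≤ ∑ l, U k l := Finset.single_le_sum (fun l _ => h1 l) (Finset.mem_univ j)
      _ = 1 := h2
  have hUhat01 : ∀ k j, 0 ≤ Uhat k j ∧ Uhat k j ≤ 1 := by
    intro k j
    obtain ⟨h1, h2⟩ := hUhat k
    refine ⟨h1 j, ?_⟩
    calc Uhat k j ≤ ∑ l, Uhat k l := Finset.single_le_sum (fun l _ => h1 l) (Finset.mem_univ j)
      _ = 1 := h2
  have hρ' : ∀ a : Fin n, ∑ j, |Ls a j| ≤ ρmax := fun a => hρ.2 ⟨a, rfl⟩
  have hd' : ω i ≤ dmax := hd.2 ⟨i, rfl⟩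
  have hd0 : 0 ≤ dmax := le_trans (hω i) hd'
  -- bound on entries of Ls * U
  have hA : ∀ j : Fin K, |(Ls * U) i j| ≤ ρmax := by
    intro j
    rw [Matrix.mul_apply]
    calc |∑ k, Ls i k * U k j| ≤ ∑ k, |Ls i k * U k j| := Finset.abs_sum_le_sum_abs _ _
      _ ≤ ∑ k, |Ls i k| := by
          apply Finset.sum_le_sum
          intro k _
          rw [abs_mul, abs_of_nonneg (hU01 k j).1]
          nlinarith [(hU01 k j).1, (hU01 k j).2, abs_nonneg (Ls i k)]
      _ ≤ ρmax := hρ' i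
  -- there is an index with mass at least 1/K
  obtain ⟨j₀, hj₀⟩ : ∃ j₀ : Fin K, (1:ℝ)/K ≤ U i j₀ := by
    by_contra h
    push_neg at h
    have hlt : ∑ j, U i j < ∑ _j : Fin K, (1:ℝ)/K :=
      Finset.sum_lt_sum_of_nonempty Finset.univ_nonempty (fun j _ => h j)
    have hsum : ∑ _j : Fin K, (1:ℝ)/K = 1 := by
      rw [Finset.sum_const, Finset.card_univ, Fintype.card_fin, nsmul_eq_mul]
      field_simp
    rw [(hU i).2, hsum] at hlt
    exact lt_irrefl _ hlt
  -- key strict inequality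
  have key : ∀ jz : Fin K, U i jz = 0 → ∀ j : Fin K, (1:ℝ)/K ≤ U i j →
      gradE Ls ω Uhat ε U i j < gradE Ls ω Uhat ε U i jz := by
    intro jz hz j hj
    have hA1 := abs_le.mp (hA j)
    have hA2 := abs_le.mp (hA jz)
    have hu1 := (hU01 i j).1
    have hu2 := (hU01 i j).2
    have hv1 := (hUhat01 i j).1
    have hv2 := (hUhat01 i j).2
    have hv1' := (hUhat01 i jz).1
    have hv2' := (hUhat01 i jz).2
    have hωi := hω i
    have hKu : (1:ℝ) ≤ U i j * K := (div_le_iff₀ hKpos).mp hj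
    have h5 : ε * (ρmax + dmax) * K < 1 := by nlinarith [hcond]
    have h6 : ε * (ρmax + dmax) < U i j := by nlinarith [h5, hKu, hKpos]
    simp only [gradE, Matrix.sub_apply, Matrix.add_apply, Matrix.smul_apply,
      Matrix.diagonal_mul, Matrix.of_apply, smul_eq_mul, Matrix.smul_apply]
    simp only [nsmul_eq_mul, Nat.cast_ofNat]
    rw [hz]
    refine lt_of_mul_lt_mul_left ?_ hε.le
    have hεne : ε ≠ 0 := ne_of_gt hε
    field_simp
    ring_nf
    nlinarith [mul_le_mul_of_nonneg_left hd' hε.le, mul_lt_mul_of_pos_left h6 hε,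
      mul_nonneg hε.le hωi, mul_le_mul_of_nonneg_left hv2' (mul_nonneg hε.le hωi),
      mul_le_mul_of_nonneg_left hu2 (mul_nonneg hε.le hωi),
      mul_nonneg (mul_nonneg hε.le hωi) hv1, hε.le, hA1.1, hA1.2, hA2.1, hA2.2,
      mul_le_mul_of_nonneg_left hA1.2 hε.le, mul_le_mul_of_nonneg_left hA2.1 hε.le]
  have hj₀pos : 0 < U i j₀ := lt_of_lt_of_le (by positivity) hj₀
  have hj₀mem : j₀ ∈ Finset.univ.filter fun j => 0 < U i j := by
    simp [hj₀pos]
  refine ⟨⟨j₀, hj₀mem⟩, ?_, ?_⟩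
  · calc (Finset.univ.filter fun j => 0 < U i j).inf' ⟨j₀, hj₀mem⟩
          (fun j => gradE Ls ω Uhat ε U i j) ≤ gradE Ls ω Uhat ε U i j₀ :=
        Finset.inf'_le _ hj₀mem
      _ < gradE Ls ω Uhat ε U i j' := key j' hj' j₀ hj₀
  · ext j
    simp only [Set.mem_setOf_eq]
    constructor
    · rintro ⟨hjpos, hmin⟩ l
      rcases lt_or_eq_of_le (hU01 i l).1 with hl | hl
      · exact hmin l hl
      · have h1 := hmin j₀ hj₀pos
        have h2 := key l hl.symm j₀ hj₀
        linarith
    · intro hmin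
      have hjpos : 0 < U i j := by
        rcases lt_or_eq_of_le (hU01 i j).1 with h | h
        · exact h
        · exfalso
          have h2 := key j h.symm j₀ hj₀
          have h1 := hmin j₀
          linarith
      exact ⟨hjpos, fun l _ => hmin l⟩
end
end

section
/- Assume ε·K·(ρ^max + d_ω^max) < 1. Then every binary matrix U ∈ Σ̄ is a stationary point of the problem of minimizing E over Σ; that is, ⟨∇E(U), Z − U⟩ ≥ 0 for every Z ∈ Σ. -/
open Matrix

noncomputable section

/-- if `ε·K·(ρ^max + d_ω^max) < 1`, then every binary matrix `U ∈ Σ̄` is a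
stationary point of the minimization of `E` over `Σ`. -/
theorem binary_is_stationary (n K : ℕ) (hn : 1 ≤ n) (hK : 2 ≤ K)
    (Ls : Matrix (Fin n) (Fin n) ℝ) (hLs : Ls.PosSemidef)
    (ω : Fin n → ℝ) (hω : ∀ i, 0 ≤ ω i)
    (Uhat : Matrix (Fin n) (Fin K) ℝ) (hUhat : Uhat ∈ SigmaSet n K)
    (ε : ℝ) (hε : 0 < ε)
    (ρmax : ℝ) (hρ : IsGreatest (Set.range fun i => ∑ j, |Ls i j|) ρmax)
    (dmax : ℝ) (hd : IsGreatest (Set.range ω) dmax)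
    (hcond : ε * K * (ρmax + dmax) < 1) :
    ∀ U ∈ SigmaBar n K, ∀ Z ∈ SigmaSet n K,
      0 ≤ frobInner (gradE Ls ω Uhat ε U) (Z - U) := by
  intro U hU Z hZ
  obtain ⟨hUS, hUbin⟩ := hU
  set G := gradE Ls ω Uhat ε U with hGdef
  -- pick the position of the 1 in each row
  have hpick : ∀ i, ∃ j, U i j = 1 := by
    intro i
    by_contra h
    push_neg at h
    have h0 : ∀ j, U i j = 0 := fun j => (hUbin i j).resolve_right (h j)
    have hsum := (hUS i).2
    simp [h0] at hsum
  choose p hp using hpick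
  have huniq : ∀ i j, U i j = 1 → j = p i := by
    intro i j hj
    by_contra hne
    have hsum := (hUS i).2
    have hnn := (hUS i).1
    have h2 : (2:ℝ) ≤ ∑ k, U i k := by
      have hsub := Finset.sum_le_sum_of_subset_of_nonneg
        (Finset.subset_univ ({j, p i} : Finset (Fin K)))
        (fun k _ _ => hnn k)
      rw [Finset.sum_pair hne, hj, hp i] at hsub
      linarith
    linarith
  have hU01 : ∀ i j, 0 ≤ U i j ∧ U i j ≤ 1 := by
    intro i j
    rcases hUbin i j with h | h <;> simp [h]
  have hrow : ∀ i, ∑ k, |Ls i k| ≤ ρmax := fun i => hρ.2 ⟨i, rfl⟩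
  have hωd : ∀ i, ω i ≤ dmax := fun i => hd.2 ⟨i, rfl⟩
  have i0 : Fin n := ⟨0, hn⟩
  have hρ0 : (0:ℝ) ≤ ρmax :=
    le_trans (Finset.sum_nonneg fun k _ => abs_nonneg _) (hrow i0)
  have hd0 : (0:ℝ) ≤ dmax := le_trans (hω i0) (hωd i0)
  have hK2 : (2:ℝ) ≤ (K:ℝ) := by exact_mod_cast hK
  have hkey : 2 * ρmax + 2 * dmax ≤ 2 * (1 / ε) := by
    have h2 : ε * 2 * (ρmax + dmax) < 1 := by nlinarith
    have h3 : (2 * ρmax + 2 * dmax) * ε < 2 := by nlinarith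
    calc 2 * ρmax + 2 * dmax = ((2 * ρmax + 2 * dmax) * ε) * (1 / ε) := by
          field_simp
      _ ≤ 2 * (1 / ε) := by
          apply mul_le_mul_of_nonneg_right (le_of_lt h3)
          positivity
  -- bound on (Ls*U) entries
  have hLU : ∀ i j, |∑ k, Ls i k * U k j| ≤ ρmax := by
    intro i j
    refine le_trans (Finset.abs_sum_le_sum_abs _ _) (le_trans ?_ (hrow i))
    refine Finset.sum_le_sum fun k _ => ?_
    rw [abs_mul, abs_of_nonneg (hU01 k j).1]
    nlinarith [abs_nonneg (Ls i k), (hU01 k j).2]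
  have hUhat01 : ∀ i j, 0 ≤ Uhat i j ∧ Uhat i j ≤ 1 := by
    intro i j
    refine ⟨(hUhat i).1 j, ?_⟩
    have := Finset.single_le_sum (f := Uhat i) (fun k _ => (hUhat i).1 k)
      (Finset.mem_univ j)
    rw [(hUhat i).2] at this
    exact this
  -- explicit formula for gradient entries
  have hG : ∀ i j, G i j = (∑ k, Ls i k * U k j) + (1/ε) * (1 - 2 * U i j)
      - ω i * (Uhat i j - U i j) := by
    intro i j
    have hdiag : (Matrix.diagonal ω * (Uhat - U)) i j = ω i * (Uhat i j - U i j) := by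
      rw [Matrix.diagonal_mul]
      simp [Matrix.sub_apply]
    have hstep : G i j = (Ls * U) i j + (1/ε) * (1 - 2 * U i j)
        - ω i * (Uhat i j - U i j) := by
      simp only [hGdef, gradE, Matrix.sub_apply, Matrix.add_apply, Matrix.smul_apply,
        Matrix.of_apply, smul_eq_mul, hdiag]
      ring
    rw [hstep, Matrix.mul_apply]
  -- rewrite the Frobenius inner product as a double sum
  have hfrob : frobInner G (Z - U) = ∑ i, ∑ j, G i j * (Z i j - U i j) := by
    rw [frobInner, Matrix.trace]
    simp only [Matrix.diag, Matrix.mul_apply, Matrix.transpose_apply,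
      Matrix.sub_apply]
    exact Finset.sum_comm
  rw [hfrob]
  refine Finset.sum_nonneg fun i _ => ?_
  have hz0 : ∑ j, (Z i j - U i j) = 0 := by
    rw [Finset.sum_sub_distrib, (hZ i).2, (hUS i).2]
    ring
  have hrw : ∑ j, G i j * (Z i j - U i j)
      = ∑ j, (G i j - G i (p i)) * (Z i j - U i j) := by
    rw [Finset.sum_congr rfl
      (fun j _ => show G i j * (Z i j - U i j)
        = (G i j - G i (p i)) * (Z i j - U i j) + G i (p i) * (Z i j - U i j)
        by ring),
      Finset.sum_add_distrib, ← Finset.mul_sum, hz0, mul_zero, add_zero]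
  rw [hrw]
  refine Finset.sum_nonneg fun j _ => ?_
  rcases hUbin i j with h0 | h1
  · -- U i j = 0
    have hzu : 0 ≤ Z i j - U i j := by
      have := (hZ i).1 j
      rw [h0]; linarith
    refine mul_nonneg ?_ hzu
    rw [hG i j, hG i (p i), h0, hp i]
    have b1 := abs_le.1 (hLU i j)
    have b2 := abs_le.1 (hLU i (p i))
    have b3 := hUhat01 i j
    have b4 := hUhat01 i (p i)
    have b5 := hωd i
    have b6 := hω i
    have c1 : ω i * Uhat i j ≤ dmax := by nlinarith
    have c2 : - (ω i * (Uhat i (p i) - 1)) ≤ dmax := by nlinarith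
    have c3 : ω i * (Uhat i j - 0) = ω i * Uhat i j := by ring
    nlinarith [b1.1, b2.2]
  · rw [huniq i j h1]
    simp
end
end
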